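/- For any m×m matrix A over a commutative ring, pf^(α)(ω(A)) = det^(α)(A), where ω(A) is the 2m×2m skew-symmetric matrix whose (r,s)-block is [[0, a_{rs}],[-a_{sr}, 0]]. -/

import Mathlib

open Matrix
open scoped Classical

variable {R : Type*} [CommRing R]

/-- The `(i,j)` entry (indices in `ZMod 2`) of the `2 × 2` block `B(r,s)` of `B`. -/
def Bblk {m : ℕ} (B : Matrix (Fin (2 * m)) (Fin (2 * m)) R) (r s : Fin m)
    (i j : ZMod 2) : R :=
  B ⟨2 * r.val + i.val, by have := r.isLt; have := ZMod.val_lt i; omega⟩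
    ⟨2 * s.val + j.val, by have := s.isLt; have := ZMod.val_lt j; omega⟩

/-- `Q(B)(τ)` for the cycle `τ = (k 0, …, k (r-1))` (with `k 0` minimal):
the sum over `i : Fin r → ZMod 2` with `i 0 = 0`; for `r = 1` it is
`B₀₁(k 0, k 0)`. -/
noncomputable def Qcyc {m r : ℕ} [NeZero r] (B : Matrix (Fin (2 * m)) (Fin (2 * m)) R)
    (k : Fin r → Fin m) : R :=
  ∑ i ∈ Finset.univ.filter (fun i : Fin r → ZMod 2 => i 0 = 0),
    (∏ j, (-1 : R) ^ (i j).val) * ∏ j, Bblk B (k j) (k (j + 1)) (i j) (i (j + 1) + 1)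

/-- The set of minimal representatives of the cycles (orbits) of `σ`. -/
noncomputable def reps {m : ℕ} (σ : Equiv.Perm (Fin m)) : Finset (Fin m) :=
  Finset.univ.filter fun x => ∀ n : ℕ, x ≤ (σ ^ n) x

/-- The number of cycles (orbits, including fixed points) of `σ`. -/
noncomputable def nu {m : ℕ} (σ : Equiv.Perm (Fin m)) : ℕ := (reps σ).card

/-- The length of the cycle of `σ` through `x`. -/
noncomputable def cycLen {m : ℕ} (σ : Equiv.Perm (Fin m)) (x : Fin m) : ℕ :=
  orderOf (σ.cycleOf x)

/-- The α-pfaffian `pf^(α)(B) = ∑_σ α^{m-ν(σ)} ∏ⱼ Q(B)(σ⁽ʲ⁾)`, the product being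
over the cycles of `σ`, each starting at its minimal element. -/
noncomputable def apf {m : ℕ} (α : R) (B : Matrix (Fin (2 * m)) (Fin (2 * m)) R) : R :=
  ∑ σ : Equiv.Perm (Fin m), α ^ (m - nu σ) *
    ∏ x ∈ reps σ,
      haveI : NeZero (cycLen σ x) := ⟨(orderOf_pos _).ne'⟩
      Qcyc B (fun j : Fin (cycLen σ x) => (σ ^ (j : ℕ)) x)

/-- The α-determinant `det^(α)(A) = ∑_σ α^{m-ν(σ)} ∏ᵢ a_{i σ(i)}`. -/
noncomputable def adet {m : ℕ} (α : R) (A : Matrix (Fin m) (Fin m) R) : R :=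
  ∑ σ : Equiv.Perm (Fin m), α ^ (m - nu σ) * ∏ i, A i (σ i)

/-- The skew-symmetric matrix `ω(A)` whose `(r,s)` block is `[[0, a_{rs}],[-a_{sr}, 0]]`. -/
def omegaMat {m : ℕ} (A : Matrix (Fin m) (Fin m) R) :
    Matrix (Fin (2 * m)) (Fin (2 * m)) R := fun i j =>
  have hi : i.val / 2 < m := by have := i.isLt; omega
  have hj : j.val / 2 < m := by have := j.isLt; omega
  if i.val % 2 = 0 ∧ j.val % 2 = 1 then A ⟨i.val / 2, hi⟩ ⟨j.val / 2, hj⟩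
  else if i.val % 2 = 1 ∧ j.val % 2 = 0 then -A ⟨j.val / 2, hj⟩ ⟨i.val / 2, hi⟩
  else 0

/-! The only nonzero entries of a block of `ω(A)` are `B₀₁(r,s) = a_{rs}` and
`B₁₀(r,s) = -a_{sr}`, so a summand `∏ⱼ B_{iⱼ, iⱼ₊₁+1}(kⱼ, kⱼ₊₁)` of `Q(ω(A))` vanishes unless
`iⱼ₊₁ = iⱼ` for all `j`, i.e. unless `i ≡ 0`. Hence `Q(ω(A))` of a cycle is the product of
the `a_{k k'}` along its edges, and the product of these over the cycles of `σ` is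
`∏ᵢ a_{i σ(i)}`. -/

instance cycLen.neZero {m : ℕ} (σ : Equiv.Perm (Fin m)) (x : Fin m) :
    NeZero (cycLen σ x) :=
  ⟨(orderOf_pos _).ne'⟩

theorem Fin.apply_eq_apply_zero_of_apply_add_one {α : Type*} {r : ℕ} [NeZero r]
    {f : Fin r → α} (h : ∀ j, f j = f (j + 1)) (j : Fin r) : f j = f 0 := by
  obtain ⟨n, rfl⟩ := Nat.exists_eq_succ_of_ne_zero (NeZero.ne r)
  induction j using Fin.induction with
  | zero => rfl
  | succ j ih => rw [← Fin.coeSucc_eq_succ, ← h, ih]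

section Cycles

open Equiv.Perm

variable {m : ℕ} {σ : Equiv.Perm (Fin m)}

theorem mem_reps {x : Fin m} : x ∈ reps σ ↔ ∀ n : ℕ, x ≤ (σ ^ n) x := by
  simp [reps]

theorem eq_of_mem_reps_of_sameCycle {x y : Fin m} (hx : x ∈ reps σ) (hy : y ∈ reps σ)
    (h : σ.SameCycle x y) : x = y := by
  obtain ⟨n, -, hn⟩ := h.exists_pow_eq'
  obtain ⟨n', -, hn'⟩ := h.symm.exists_pow_eq'
  exact le_antisymm (hn ▸ mem_reps.mp hx n) (hn' ▸ mem_reps.mp hy n')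

theorem exists_mem_reps_sameCycle (σ : Equiv.Perm (Fin m)) (i : Fin m) :
    ∃ x ∈ reps σ, σ.SameCycle x i := by
  set orbit := Finset.univ.filter (σ.SameCycle i)
  have hne : orbit.Nonempty := ⟨i, by simp [orbit, SameCycle.refl]⟩
  have hmin : σ.SameCycle i (orbit.min' hne) := by simpa [orbit] using orbit.min'_mem hne
  refine ⟨orbit.min' hne, mem_reps.mpr fun n => orbit.min'_le _ ?_, hmin.symm⟩
  simpa [orbit, sameCycle_pow_right] using hmin

theorem pow_apply_injOn_cycLen (σ : Equiv.Perm (Fin m)) (x : Fin m) :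
    Set.InjOn (fun n : ℕ => (σ ^ n) x) (Set.Iio (cycLen σ x)) := by
  intro a ha b hb h
  have hpow : σ.cycleOf x ^ a = σ.cycleOf x ^ b := by
    by_cases hx : σ x = x
    · simp [cycleOf_eq_one_iff σ |>.mpr hx]
    · refine (σ.isCycle_cycleOf hx).pow_eq_pow_iff.mpr ⟨x, by simpa using hx, ?_⟩
      simpa only [cycleOf_pow_apply_self] using h
  exact (pow_eq_pow_iff_modEq.mp hpow).eq_of_lt_of_lt ha hb

theorem exists_pow_apply_eq_of_sameCycle {x i : Fin m} (h : σ.SameCycle x i) :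
    ∃ j : Fin (cycLen σ x), (σ ^ (j : ℕ)) x = i := by
  obtain ⟨n, -, hn⟩ := h.exists_pow_eq'
  refine ⟨⟨n % cycLen σ x, Nat.mod_lt _ (orderOf_pos _)⟩, ?_⟩
  simpa [cycLen, pow_mod_orderOf_cycleOf_apply] using hn

theorem pow_val_add_one_apply (x : Fin m) (j : Fin (cycLen σ x)) :
    (σ ^ ((j + 1 : Fin (cycLen σ x)) : ℕ)) x = σ ((σ ^ (j : ℕ)) x) := by
  rw [Fin.val_add, Fin.val_one', Nat.add_mod_mod]
  exact (σ.pow_mod_orderOf_cycleOf_apply _ x).trans (by rw [pow_succ', mul_apply])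

theorem prod_reps_prod_pow_apply {M : Type*} [CommMonoid M] (σ : Equiv.Perm (Fin m))
    (g : Fin m → M) :
    ∏ x ∈ reps σ, ∏ j : Fin (cycLen σ x), g ((σ ^ (j : ℕ)) x) = ∏ i, g i := by
  rw [Finset.prod_sigma']
  refine Finset.prod_bij (fun p _ => (σ ^ (p.2 : ℕ)) p.1) (fun _ _ => Finset.mem_univ _)
    ?_ ?_ (fun _ _ => rfl)
  · rintro ⟨x, j⟩ hxj ⟨y, j'⟩ hyj' h
    simp only [Finset.mem_sigma, Finset.mem_univ, and_true] at hxj hyj' h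
    have hxy : σ.SameCycle x y := by
      rw [← sameCycle_pow_left (n := j), ← sameCycle_pow_right (n := j'), h]
    obtain rfl := eq_of_mem_reps_of_sameCycle hxj hyj' hxy
    obtain rfl := Fin.ext (pow_apply_injOn_cycLen σ x j.isLt j'.isLt h)
    rfl
  · intro i _
    obtain ⟨x, hx, hxi⟩ := exists_mem_reps_sameCycle σ i
    obtain ⟨j, hj⟩ := exists_pow_apply_eq_of_sameCycle hxi
    exact ⟨⟨x, j⟩, Finset.mem_sigma.mpr ⟨hx, Finset.mem_univ _⟩, hj⟩

end Cycles

section Omega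

variable {m : ℕ} (A : Matrix (Fin m) (Fin m) R)

theorem Bblk_omegaMat (r s : Fin m) (i j : ZMod 2) :
    Bblk (omegaMat A) r s i j =
      if i = 0 ∧ j = 1 then A r s else if i = 1 ∧ j = 0 then -A s r else 0 := by
  have hdiv : ∀ a c : ℕ, c < 2 → (2 * a + c) / 2 = a := by omega
  have hmod : ∀ a c : ℕ, c < 2 → (2 * a + c) % 2 = c := by omega
  have hval₀ : (0 : ZMod 2).val = 0 := rfl
  have hval₁ : (1 : ZMod 2).val = 1 := rfl
  have h01 : ∀ z : ZMod 2, z = 0 ∨ z = 1 := by decide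
  rcases h01 i with rfl | rfl <;> rcases h01 j with rfl | rfl <;>
    simp [Bblk, omegaMat, hval₀, hval₁, hdiv, hmod]

theorem Bblk_omegaMat_add_one_of_ne (r s : Fin m) {i j : ZMod 2} (h : i ≠ j) :
    Bblk (omegaMat A) r s i (j + 1) = 0 := by
  rw [Bblk_omegaMat, if_neg, if_neg] <;> revert i j <;> decide

theorem Qcyc_omegaMat {r : ℕ} [NeZero r] (k : Fin r → Fin m) :
    Qcyc (omegaMat A) k = ∏ j, A (k j) (k (j + 1)) := by
  rw [Qcyc, Finset.sum_eq_single_of_mem 0 (by simp)]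
  · simp [Bblk_omegaMat]
  · intro i hi hne
    obtain ⟨j, hj⟩ : ∃ j, i j ≠ i (j + 1) := by
      by_contra! h
      exact hne (funext fun j => (Fin.apply_eq_apply_zero_of_apply_add_one h j).trans
        (Finset.mem_filter.mp hi).2)
    exact mul_eq_zero_of_right _
      (Finset.prod_eq_zero (Finset.mem_univ j) (Bblk_omegaMat_add_one_of_ne A _ _ hj))

end Omega

theorem apf_omega_eq_adet (m : ℕ) (α : R) (A : Matrix (Fin m) (Fin m) R) :
    apf α (omegaMat A) = adet α A := by
  unfold apf adet
  refine Finset.sum_congr rfl fun σ _ => congrArg _ ?_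
  rw [← prod_reps_prod_pow_apply σ fun i => A i (σ i)]
  refine Finset.prod_congr rfl fun x _ => ?_
  simp only [Qcyc_omegaMat, pow_val_add_one_apply]
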